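/- arXiv:1901.03917 — 2 statements merged into one kernel-verified Lean document; each statement's English description precedes it below -/
import Mathlib

section
/- For every n ≥ 4, the total number of distinct 4-cycles in the Bubble-sort graph BS_n equals (n−2)(n−3)·n!/8. -/
/-- The adjacent transposition `b_i` (1-indexed, swapping positions `i` and `i+1`,
i.e. the 0-indexed positions `i-1` and `i` of `Fin n`), extended by `1` outside
the valid range `1 ≤ i ≤ n-1`. -/
def bsGen (n i : ℕ) : Equiv.Perm (Fin n) :=
  if h : 0 < i ∧ i < n then
    Equiv.swap ⟨i - 1, lt_of_le_of_lt (Nat.pred_le i) h.2⟩ ⟨i, h.2⟩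
  else 1

theorem bsGen_ne_one (n i : ℕ) (h1 : 0 < i) (h2 : i < n) : bsGen n i ≠ 1 := by
  rw [bsGen, dif_pos ⟨h1, h2⟩]
  intro h
  have h' := congrArg Fin.val (Equiv.swap_eq_one_iff.mp h)
  simp at h'
  omega

theorem bsGen_mul_self (n i : ℕ) : bsGen n i * bsGen n i = 1 := by
  rw [bsGen]; split
  · exact Equiv.swap_mul_self _ _
  · simp

/-- The Bubble-sort graph `BS_n` on the symmetric group `Sym_n = Equiv.Perm (Fin n)`:
`π` and `τ` are adjacent iff `τ = π * b_i` for some `1 ≤ i ≤ n-1`. -/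
def BS (n : ℕ) : SimpleGraph (Equiv.Perm (Fin n)) where
  Adj π τ := ∃ i, 0 < i ∧ i < n ∧ τ = π * bsGen n i
  symm := by
    constructor
    rintro π τ ⟨i, h1, h2, rfl⟩
    exact ⟨i, h1, h2, by rw [mul_assoc, bsGen_mul_self, mul_one]⟩
  loopless := by
    constructor
    rintro π ⟨i, h1, h2, h⟩
    exact bsGen_ne_one n i h1 h2 (mul_left_cancel (h.symm.trans (mul_one π).symm))

/-- `H` is an `ℓ`-cycle subgraph of `BS n`: the subgraph traced by some cycle walk
with `ℓ` vertices (equivalently, of length `ℓ`).  Since a cycle subgraph determines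
the traversal up to starting vertex and direction, counting such subgraphs counts
cycles once regardless of starting vertex and direction. -/
def IsCycleSub {n : ℕ} (H : (BS n).Subgraph) (ℓ : ℕ) : Prop :=
  ∃ (u : Equiv.Perm (Fin n)) (w : (BS n).Walk u u),
    w.IsCycle ∧ w.length = ℓ ∧ H = w.toSubgraph

/-!
Every 4-cycle of `BS n` is a square `π, π b_i, π b_i b_j, π b_j` with `|i - j| ≥ 2`. Indeed a
closed walk of length four spells a relation `b_a b_b b_c b_d = 1` without backtracking, i.e.
`b_a b_b = b_d b_c`; as the two sides must move the same points, `{a, b} = {c, d}`, and then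
`b_a` and `b_b` commute, which forces `|a - b| ≥ 2`. Each square arises from exactly eight
triples `(π, i, j)` (a starting vertex and a direction), and there are `n! (n - 2) (n - 3)`
such triples.
-/

-- `bsGen n i` read on positions as a map `ℕ → ℕ`, turning identities between generators
-- into `omega` goals.
def adjSwapNat (i x : ℕ) : ℕ := if x + 1 = i then i else if x = i then x - 1 else x

lemma bsGen_apply_val {n i : ℕ} (hi : 0 < i) (hin : i < n) (x : Fin n) :
    (bsGen n i x : ℕ) = adjSwapNat i x := by
  rw [bsGen, dif_pos ⟨hi, hin⟩, Equiv.swap_apply_def, adjSwapNat]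
  split_ifs <;> simp only [Fin.ext_iff] at * <;> omega

lemma adjSwapNat_adjSwapNat_ne_self_iff {a b x : ℕ} (ha : 0 < a) (hb : 0 < b) (hab : a ≠ b) :
    adjSwapNat a (adjSwapNat b x) ≠ x ↔ x = a - 1 ∨ x = a ∨ x = b - 1 ∨ x = b := by
  unfold adjSwapNat
  split_ifs <;> omega

lemma adjSwapNat_adjSwapNat_self (a x : ℕ) : adjSwapNat a (adjSwapNat a x) = x := by
  unfold adjSwapNat
  split_ifs <;> omega

lemma bsGen_inv (n i : ℕ) : (bsGen n i)⁻¹ = bsGen n i :=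
  inv_eq_of_mul_eq_one_right (bsGen_mul_self n i)

lemma eq_of_bsGen_eq {n i j : ℕ} (hi : 0 < i) (hin : i < n) (hj : 0 < j) (hjn : j < n)
    (h : bsGen n i = bsGen n j) : i = j := by
  have := congrArg Fin.val (DFunLike.congr_fun h ⟨i - 1, by omega⟩)
  rw [bsGen_apply_val hi hin, bsGen_apply_val hj hjn, Fin.val_mk, adjSwapNat, adjSwapNat] at this
  split_ifs at this <;> omega

lemma bsGen_mul_bsGen_ne_one {n i j : ℕ} (hi : 0 < i) (hin : i < n) (hj : 0 < j) (hjn : j < n)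
    (hij : i ≠ j) : bsGen n i * bsGen n j ≠ 1 := fun h ↦
  hij <| eq_of_bsGen_eq hi hin hj hjn <| by rwa [mul_eq_one_iff_eq_inv, bsGen_inv] at h

@[simp]
lemma mul_bsGen_mul_bsGen_self {n : ℕ} (π : Equiv.Perm (Fin n)) (i : ℕ) :
    π * bsGen n i * bsGen n i = π := by
  rw [mul_assoc, bsGen_mul_self, mul_one]

def IsDistantPair (n i j : ℕ) : Prop :=
  0 < i ∧ i < n ∧ 0 < j ∧ j < n ∧ (i + 2 ≤ j ∨ j + 2 ≤ i)

instance (n i j : ℕ) : Decidable (IsDistantPair n i j) :=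
  inferInstanceAs (Decidable (_ ∧ _))

namespace IsDistantPair

variable {n i j : ℕ}

lemma symm (h : IsDistantPair n i j) : IsDistantPair n j i := by
  obtain ⟨hi, hin, hj, hjn, hgap⟩ := h
  exact ⟨hj, hjn, hi, hin, hgap.symm⟩

lemma bsGen_mul_comm (h : IsDistantPair n i j) :
    bsGen n i * bsGen n j = bsGen n j * bsGen n i := by
  obtain ⟨hi, hin, hj, hjn, hgap⟩ := h
  ext x
  simp only [Equiv.Perm.mul_apply, bsGen_apply_val hi hin, bsGen_apply_val hj hjn]
  unfold adjSwapNat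
  split_ifs <;> omega

lemma mul_bsGen_mul_bsGen_comm (h : IsDistantPair n i j) (π : Equiv.Perm (Fin n)) :
    π * bsGen n i * bsGen n j = π * bsGen n j * bsGen n i := by
  rw [mul_assoc, h.bsGen_mul_comm, mul_assoc]

lemma square_nodup (h : IsDistantPair n i j) (π : Equiv.Perm (Fin n)) :
    [π, π * bsGen n i, π * bsGen n i * bsGen n j, π * bsGen n j].Nodup := by
  obtain ⟨hi, hin, hj, hjn, hgap⟩ := h
  have hij : i ≠ j := by omega
  have := bsGen_ne_one n i hi hin
  have := bsGen_ne_one n j hj hjn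
  have := bsGen_mul_bsGen_ne_one hi hin hj hjn hij
  have : bsGen n i ≠ bsGen n j := fun h ↦ hij (eq_of_bsGen_eq hi hin hj hjn h)
  simp [mul_assoc, *, eq_comm (a := π)]

end IsDistantPair

lemma eq_of_bsGen_mul_bsGen_mul_bsGen_mul_bsGen_eq_one {n a b c d : ℕ} (ha : 0 < a) (han : a < n)
    (hb : 0 < b) (hbn : b < n) (hc : 0 < c) (hcn : c < n) (hd : 0 < d) (hdn : d < n)
    (hab : a ≠ b) (hbc : b ≠ c) (h : bsGen n a * bsGen n b * bsGen n c * bsGen n d = 1) :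
    c = a ∧ d = b ∧ IsDistantPair n a b := by
  have hval (x : ℕ) (hx : x < n) :
      adjSwapNat a (adjSwapNat b x) = adjSwapNat d (adjSwapNat c x) := by
    have hbd : bsGen n a * bsGen n b = bsGen n d * bsGen n c := calc
      _ = bsGen n a * bsGen n b * bsGen n c * bsGen n d * (bsGen n d * bsGen n c) := by
        simp only [← mul_assoc, mul_bsGen_mul_bsGen_self]
      _ = _ := by rw [h, one_mul]
    have := congrArg Fin.val (DFunLike.congr_fun hbd ⟨x, hx⟩)
    simp only [Equiv.Perm.mul_apply] at this
    rwa [bsGen_apply_val ha han, bsGen_apply_val hb hbn, bsGen_apply_val hd hdn,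
      bsGen_apply_val hc hcn] at this
  have hcd : c ≠ d := by
    rintro rfl
    have := hval a han
    rw [adjSwapNat_adjSwapNat_self] at this
    exact (adjSwapNat_adjSwapNat_ne_self_iff ha hb hab).2 (by omega) this
  -- `b_a b_b` moves exactly the points `a - 1, a, b - 1, b`, the extreme ones being
  -- `min a b - 1` and `max a b`
  have hmoved (x : ℕ) (hx : x < n) :
      (x = a - 1 ∨ x = a ∨ x = b - 1 ∨ x = b) ↔ (x = d - 1 ∨ x = d ∨ x = c - 1 ∨ x = c) := by
    rw [← adjSwapNat_adjSwapNat_ne_self_iff ha hb hab,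
      ← adjSwapNat_adjSwapNat_ne_self_iff hd hc (Ne.symm hcd), hval x hx]
  have hmax : max a b = max c d := by
    have := (hmoved (max a b) (by omega)).1 (by omega)
    have := (hmoved (max c d) (by omega)).2 (by omega)
    omega
  have hmin : min a b = min c d := by
    have := (hmoved (min a b - 1) (by omega)).1 (by omega)
    have := (hmoved (min c d - 1) (by omega)).2 (by omega)
    omega
  obtain ⟨hca, hdb⟩ : c = a ∧ d = b := by omega
  subst c d
  refine ⟨rfl, rfl, ha, han, hb, hbn, ?_⟩
  rcases (by omega : b = a + 1 ∨ a = b + 1 ∨ a + 2 ≤ b ∨ b + 2 ≤ a) with rfl | rfl | h | h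
  · have := hval (a - 1) (by omega)
    unfold adjSwapNat at this
    split_ifs at this <;> omega
  · have := hval (b - 1) (by omega)
    unfold adjSwapNat at this
    split_ifs at this <;> omega
  all_goals omega

section Square

variable {n i j : ℕ}

def squareWalk (π : Equiv.Perm (Fin n)) (h : IsDistantPair n i j) : (BS n).Walk π π :=
  .cons (show (BS n).Adj π (π * bsGen n i) from ⟨i, h.1, h.2.1, rfl⟩) <|
  .cons (show (BS n).Adj _ (π * bsGen n i * bsGen n j) from ⟨j, h.2.2.1, h.2.2.2.1, rfl⟩) <|
  .cons (show (BS n).Adj _ (π * bsGen n j) from ⟨i, h.1, h.2.1, by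
      rw [mul_assoc π, h.bsGen_mul_comm, ← mul_assoc, mul_assoc _ (bsGen n i), bsGen_mul_self,
        mul_one]⟩) <|
  .cons (show (BS n).Adj _ π from ⟨j, h.2.2.1, h.2.2.2.1, by
      rw [mul_assoc, bsGen_mul_self, mul_one]⟩)
  .nil

def squareVerts (π : Equiv.Perm (Fin n)) (i j : ℕ) : Finset (Equiv.Perm (Fin n)) :=
  {π, π * bsGen n i, π * bsGen n i * bsGen n j, π * bsGen n j}

lemma squareWalk_isCycle (π : Equiv.Perm (Fin n)) (h : IsDistantPair n i j) :
    (squareWalk π h).IsCycle := by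
  have := h.square_nodup π
  unfold squareWalk
  rw [SimpleGraph.Walk.cons_isCycle_iff, SimpleGraph.Walk.isPath_def]
  simp_all [mul_assoc]

lemma card_squareVerts (π : Equiv.Perm (Fin n)) (h : IsDistantPair n i j) :
    (squareVerts π i j).card = 4 := by
  simpa [squareVerts] using List.toFinset_card_of_nodup (h.square_nodup π)

lemma verts_toSubgraph_squareWalk (π : Equiv.Perm (Fin n)) (h : IsDistantPair n i j) :
    (squareWalk π h).toSubgraph.verts = squareVerts π i j := by
  ext x
  rw [Finset.mem_coe, SimpleGraph.Walk.mem_verts_toSubgraph]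
  simp only [squareWalk, SimpleGraph.Walk.support_cons, SimpleGraph.Walk.support_nil,
    List.mem_cons, List.not_mem_nil, or_false, squareVerts, Finset.mem_insert, Finset.mem_singleton]
  tauto

lemma squareWalk_toSubgraph_adj {π : Equiv.Perm (Fin n)} (h : IsDistantPair n i j)
    {x y : Equiv.Perm (Fin n)} : (squareWalk π h).toSubgraph.Adj x y ↔
      x ∈ squareVerts π i j ∧ (y = x * bsGen n i ∨ y = x * bsGen n j) := by
  simp only [squareWalk, SimpleGraph.Walk.toSubgraph, SimpleGraph.Subgraph.sup_adj,
    SimpleGraph.subgraphOfAdj_adj, Sym2.eq_iff, SimpleGraph.singletonSubgraph_adj, Pi.bot_apply,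
    Prop.bot_eq_false, or_false, squareVerts, Finset.mem_insert, Finset.mem_singleton]
  constructor
  · rintro ((⟨rfl, rfl⟩ | ⟨rfl, rfl⟩) | (⟨rfl, rfl⟩ | ⟨rfl, rfl⟩) | (⟨rfl, rfl⟩ | ⟨rfl, rfl⟩) |
      (⟨rfl, rfl⟩ | ⟨rfl, rfl⟩)) <;> simp [h.mul_bsGen_mul_bsGen_comm]
  · rintro ⟨rfl | rfl | rfl | rfl, rfl | rfl⟩ <;> simp [h.mul_bsGen_mul_bsGen_comm]

lemma squareVerts_comm (π : Equiv.Perm (Fin n)) (h : IsDistantPair n i j) :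
    squareVerts π j i = squareVerts π i j := by
  ext
  simp only [squareVerts, Finset.mem_insert, Finset.mem_singleton, h.mul_bsGen_mul_bsGen_comm]
  tauto

lemma squareVerts_mul_bsGen (π : Equiv.Perm (Fin n)) :
    squareVerts (π * bsGen n i) i j = squareVerts π i j := by
  ext
  simp only [squareVerts, Finset.mem_insert, Finset.mem_singleton, mul_bsGen_mul_bsGen_self]
  tauto

lemma squareVerts_eq_of_mem {π u : Equiv.Perm (Fin n)} (h : IsDistantPair n i j)
    (hπ : π ∈ squareVerts u i j) : squareVerts π i j = squareVerts u i j := by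
  simp only [squareVerts, Finset.mem_insert, Finset.mem_singleton] at hπ
  rcases hπ with rfl | rfl | rfl | rfl
  · rfl
  · exact squareVerts_mul_bsGen u
  · rw [← squareVerts_comm _ h, squareVerts_mul_bsGen, squareVerts_comm _ h,
      squareVerts_mul_bsGen]
  · rw [← squareVerts_comm _ h, squareVerts_mul_bsGen, squareVerts_comm _ h]

lemma squareWalk_toSubgraph_eq_iff {π u : Equiv.Perm (Fin n)} {a b : ℕ}
    (hab : IsDistantPair n a b) (h : IsDistantPair n i j) :
    (squareWalk π hab).toSubgraph = (squareWalk u h).toSubgraph ↔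
      π ∈ squareVerts u i j ∧ (a = i ∧ b = j ∨ a = j ∧ b = i) := by
  constructor
  · intro hEq
    have step {c : ℕ} (hc : 0 < c) (hcn : c < n)
        (hadj : (squareWalk π hab).toSubgraph.Adj π (π * bsGen n c)) :
        π ∈ squareVerts u i j ∧ (c = i ∨ c = j) := by
      rw [hEq, squareWalk_toSubgraph_adj, mul_right_inj, mul_right_inj] at hadj
      exact ⟨hadj.1, hadj.2.imp (eq_of_bsGen_eq hc hcn h.1 h.2.1)
        (eq_of_bsGen_eq hc hcn h.2.2.1 h.2.2.2.1)⟩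
    have hπ : π ∈ squareVerts π a b := Finset.mem_insert_self _ _
    obtain ⟨hmem, ha⟩ := step hab.1 hab.2.1 ((squareWalk_toSubgraph_adj hab).2 ⟨hπ, .inl rfl⟩)
    obtain ⟨-, hb⟩ := step hab.2.2.1 hab.2.2.2.1
      ((squareWalk_toSubgraph_adj hab).2 ⟨hπ, .inr rfl⟩)
    have := hab.2.2.2.2
    have := h.2.2.2.2
    exact ⟨hmem, by omega⟩
  · rintro ⟨hπ, ⟨rfl, rfl⟩ | ⟨rfl, rfl⟩⟩
    · ext x y
      · rw [verts_toSubgraph_squareWalk, verts_toSubgraph_squareWalk,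
          squareVerts_eq_of_mem h hπ]
      · rw [squareWalk_toSubgraph_adj, squareWalk_toSubgraph_adj, squareVerts_eq_of_mem h hπ]
    · ext x y
      · rw [verts_toSubgraph_squareWalk, verts_toSubgraph_squareWalk, squareVerts_comm _ h,
          squareVerts_eq_of_mem h hπ]
      · rw [squareWalk_toSubgraph_adj, squareWalk_toSubgraph_adj, squareVerts_comm _ h,
          squareVerts_eq_of_mem h hπ, or_comm]

end Square

lemma exists_squareWalk_of_isCycleSub {n : ℕ} {H : (BS n).Subgraph} (hH : IsCycleSub H 4) :
    ∃ (u : Equiv.Perm (Fin n)) (i j : ℕ) (h : IsDistantPair n i j),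
      H = (squareWalk u h).toSubgraph := by
  obtain ⟨u, w, hcyc, hlen, rfl⟩ := hH
  rcases w with _ | ⟨h1, _ | ⟨h2, _ | ⟨h3, _ | ⟨h4, _ | ⟨_, _⟩⟩⟩⟩⟩ <;>
    simp only [SimpleGraph.Walk.length_cons, SimpleGraph.Walk.length_nil] at hlen <;>
    try omega
  rename_i v₁ v₂ v₃
  obtain ⟨i₁, hi₁, hi₁n, rfl⟩ := id h1
  obtain ⟨i₂, hi₂, hi₂n, rfl⟩ := id h2
  obtain ⟨i₃, hi₃, hi₃n, hv₃⟩ := id h3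
  obtain ⟨i₄, hi₄, hi₄n, hu⟩ := id h4
  have hnodup := hcyc.support_nodup
  simp only [SimpleGraph.Walk.support_cons, SimpleGraph.Walk.support_nil, List.tail_cons,
    List.nodup_cons, List.mem_cons, List.not_mem_nil, or_false] at hnodup
  have h12 : i₁ ≠ i₂ := by
    rintro rfl
    exact hnodup.2.1 (.inr (mul_bsGen_mul_bsGen_self u i₁))
  have h23 : i₂ ≠ i₃ := by
    rintro rfl
    exact hnodup.1 (.inr (.inl (by rw [hv₃, mul_bsGen_mul_bsGen_self])))
  have hrel : bsGen n i₁ * bsGen n i₂ * bsGen n i₃ * bsGen n i₄ = 1 := by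
    rw [hv₃] at hu
    simpa only [mul_assoc, left_eq_mul] using hu
  obtain ⟨hi₃₁, hi₄₂, h⟩ := eq_of_bsGen_mul_bsGen_mul_bsGen_mul_bsGen_eq_one hi₁ hi₁n hi₂ hi₂n
    hi₃ hi₃n hi₄ hi₄n h12 h23 hrel
  subst i₃ i₄
  rw [h.mul_bsGen_mul_bsGen_comm, mul_bsGen_mul_bsGen_self] at hv₃
  subst hv₃
  exact ⟨u, i₁, i₂, h, rfl⟩

open Finset

def distantPairs (n : ℕ) : Finset (ℕ × ℕ) :=
  {p ∈ range n ×ˢ range n | IsDistantPair n p.1 p.2}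

lemma mem_distantPairs {n : ℕ} {p : ℕ × ℕ} : p ∈ distantPairs n ↔ IsDistantPair n p.1 p.2 := by
  rw [distantPairs, mem_filter, mem_product, mem_range, mem_range, and_iff_right_iff_imp]
  exact fun h ↦ ⟨h.2.1, h.2.2.2.1⟩

/-- Ordered pairs of distinct elements of `range (n - 2)` are spread apart into distant pairs by
shifting the smaller entry by one and the larger one by two. -/
lemma card_distantPairs (n : ℕ) : #(distantPairs n) = (n - 2) * (n - 3) := by
  have hoff : #(range (n - 2)).offDiag = (n - 2) * (n - 3) := by
    rw [offDiag_card, card_range, ← Nat.mul_sub_one, Nat.sub_sub]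
  rw [← hoff]
  refine card_nbij' (fun p ↦ if p.1 < p.2 then (p.1 - 1, p.2 - 2) else (p.1 - 2, p.2 - 1))
    (fun p ↦ if p.1 < p.2 then (p.1 + 1, p.2 + 2) else (p.1 + 2, p.2 + 1)) ?_ ?_ ?_ ?_ <;>
  · rintro ⟨x, y⟩ hp
    dsimp only
    split_ifs <;>
      simp only [mem_coe, mem_distantPairs, IsDistantPair, mem_offDiag, mem_range,
        Prod.mk.injEq] at * <;>
      omega

def squareTriples (n : ℕ) : Finset (Equiv.Perm (Fin n) × ℕ × ℕ) :=
  univ ×ˢ distantPairs n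

lemma mem_squareTriples {n : ℕ} {t : Equiv.Perm (Fin n) × ℕ × ℕ} :
    t ∈ squareTriples n ↔ IsDistantPair n t.2.1 t.2.2 := by
  rw [squareTriples, mem_product, mem_distantPairs, and_iff_right (mem_univ _)]

lemma card_squareTriples (n : ℕ) :
    #(squareTriples n) = n.factorial * ((n - 2) * (n - 3)) := by
  rw [squareTriples, card_product, card_univ, Fintype.card_perm, Fintype.card_fin,
    card_distantPairs]

def squareSubgraph (n : ℕ) (t : Equiv.Perm (Fin n) × ℕ × ℕ) : (BS n).Subgraph :=
  if h : IsDistantPair n t.2.1 t.2.2 then (squareWalk t.1 h).toSubgraph else ⊥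

lemma squareSubgraph_of_isDistantPair {n i j : ℕ} (π : Equiv.Perm (Fin n))
    (h : IsDistantPair n i j) : squareSubgraph n (π, i, j) = (squareWalk π h).toSubgraph :=
  dif_pos h

lemma coe_image_squareSubgraph (n : ℕ) [DecidableEq (BS n).Subgraph] :
    ((squareTriples n).image (squareSubgraph n) : Set (BS n).Subgraph) =
      {H | IsCycleSub H 4} := by
  ext H
  simp only [coe_image, Set.mem_image, mem_coe, mem_squareTriples, Prod.exists,
    Set.mem_ofPred_eq]
  constructor
  · rintro ⟨π, i, j, h, rfl⟩
    rw [squareSubgraph_of_isDistantPair π h]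
    exact ⟨π, squareWalk π h, squareWalk_isCycle π h, rfl, rfl⟩
  · intro hH
    obtain ⟨u, i, j, h, rfl⟩ := exists_squareWalk_of_isCycleSub hH
    exact ⟨u, i, j, h, squareSubgraph_of_isDistantPair u h⟩

/-- Each square is traversed from each of its four vertices in two directions. -/
lemma card_filter_squareSubgraph_eq {n i j : ℕ} [DecidableEq (BS n).Subgraph]
    (u : Equiv.Perm (Fin n)) (h : IsDistantPair n i j) :
    #{t ∈ squareTriples n | squareSubgraph n t = (squareWalk u h).toSubgraph} = 8 := by
  have hfiber : {t ∈ squareTriples n | squareSubgraph n t = (squareWalk u h).toSubgraph} =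
      squareVerts u i j ×ˢ {(i, j), (j, i)} := by
    ext ⟨π, a, b⟩
    simp only [mem_filter, mem_squareTriples, mem_product, mem_insert, mem_singleton,
      Prod.mk.injEq]
    constructor
    · rintro ⟨hab, hEq⟩
      rwa [squareSubgraph_of_isDistantPair π hab, squareWalk_toSubgraph_eq_iff] at hEq
    · rintro ⟨hπ, hab⟩
      have hab' : IsDistantPair n a b := by
        rcases hab with ⟨rfl, rfl⟩ | ⟨rfl, rfl⟩
        exacts [h, h.symm]
      rw [squareSubgraph_of_isDistantPair π hab', squareWalk_toSubgraph_eq_iff]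
      exact ⟨hab', hπ, hab⟩
  have hij : (i, j) ≠ (j, i) := by
    have := h.2.2.2.2
    simp only [ne_eq, Prod.mk.injEq]
    omega
  rw [hfiber, card_product, card_squareVerts u h, card_pair hij]

theorem bs_four_cycles_total_general (n : ℕ) :
    {H : (BS n).Subgraph | IsCycleSub H 4}.ncard = (n - 2) * (n - 3) * Nat.factorial n / 8 := by
  classical
  have hfibers : #(squareTriples n) = #((squareTriples n).image (squareSubgraph n)) * 8 := by
    rw [card_eq_sum_card_image (squareSubgraph n), ← smul_eq_mul, ← sum_const]
    refine sum_congr rfl fun H hH ↦ ?_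
    have hH' : H ∈ {H : (BS n).Subgraph | IsCycleSub H 4} := by
      rw [← coe_image_squareSubgraph]
      exact hH
    obtain ⟨u, i, j, h, rfl⟩ := exists_squareWalk_of_isCycleSub hH'
    exact card_filter_squareSubgraph_eq u h
  rw [← coe_image_squareSubgraph, Set.ncard_coe_finset, mul_comm, ← card_squareTriples, hfibers,
    Nat.mul_div_cancel _ (by norm_num)]

/-- for `n ≥ 4`, the total number of distinct 4-cycles in `BS_n`
equals `(n-2)(n-3)·n!/8`. -/
theorem bs_four_cycles_total (n : ℕ) (hn : 4 ≤ n) :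
    {H : (BS n).Subgraph | IsCycleSub H 4}.ncard = (n - 2) * (n - 3) * Nat.factorial n / 8 :=
  bs_four_cycles_total_general n
end

section
/- Let n ≥ 3, let π be a vertex of the Bubble-sort graph BS_n, and let 1 ≤ d ≤ n−2 and 1 ≤ j ≤ n−d. Set τ = π · b_j · b_{j+1} · ⋯ · b_{j+d−1} (a product of d successively dependent adjacent transpositions, which shifts one entry of π by d positions). Then the walk π, π b_j, π b_j b_{j+1}, …, τ is the unique path of length d in BS_n from π to τ; in particular there is no second path of length d between π and τ that is internally disjoint from it. -/
/-- The set of generator labels carried by the edges of a subgraph `H` of `BS n`: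
an edge `{π, τ}` carries the unique generator label `π⁻¹ * τ`. -/
def labelSet {n : ℕ} (H : (BS n).Subgraph) : Set (Equiv.Perm (Fin n)) :=
  {g | ∃ π τ, H.Adj π τ ∧ g = π⁻¹ * τ}

/-- The list of generator labels read along a walk in `BS n`. -/
def labelList {n : ℕ} {u v : Equiv.Perm (Fin n)} (w : (BS n).Walk u v) :
    List (Equiv.Perm (Fin n)) :=
  w.darts.map (fun d => d.toProd.1⁻¹ * d.toProd.2)

/-- The cycle subgraph `H` has the form given by the list of generators `L`:
reading the edge labels along the cycle from some vertex in some direction yields `L`. -/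
def HasForm {n : ℕ} (H : (BS n).Subgraph) (L : List (Equiv.Perm (Fin n))) : Prop :=
  ∃ (σ : Equiv.Perm (Fin n)) (w : (BS n).Walk σ σ),
    w.IsCycle ∧ H = w.toSubgraph ∧ labelList w = L

/-!
The product `σ = b_j ⋯ b_{j+d-1}` sends the point `j + d - 1` of `Fin n` to `j - 1`, while an
adjacent transposition moves any point by at most one. Writing `π⁻¹ τ = σ` as the product of the
labels along a walk, a walk from `π` to `τ = π σ` therefore has length at least `d`, and if its
length is exactly `d`, every label, read from the right, must lower the image of `j + d - 1` by
exactly one; this forces the labels to be `b_j, …, b_{j+d-1}` in order. A walk is determined by its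
start and its labels, and bypassing the obvious walk of length `d` gives a path of length `d`.
-/

namespace BubbleSort

open SimpleGraph

variable {n : ℕ}

lemma val_le_bsGen_apply_add_one (i : ℕ) (x : Fin n) : x.val ≤ (bsGen n i x).val + 1 := by
  unfold bsGen
  split_ifs
  · rw [Equiv.swap_apply_def]
    split_ifs <;> simp_all [Fin.ext_iff] <;> omega
  · simp

lemma eq_of_bsGen_apply_add_one {i : ℕ} {x : Fin n} (h : (bsGen n i x).val + 1 = x.val) :
    i = x.val := by
  unfold bsGen at h
  split_ifs at h
  · rw [Equiv.swap_apply_def] at h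
    split_ifs at h <;> simp_all [Fin.ext_iff]; omega
  · simp at h

lemma bsGen_apply_self {i : ℕ} (hi : 0 < i) {x : Fin n} (hx : x.val = i) :
    (bsGen n i x).val = i - 1 := by
  obtain ⟨x, hxn⟩ := x
  subst hx
  rw [bsGen, dif_pos ⟨hi, hxn⟩, Equiv.swap_apply_right]

lemma val_le_prod_apply_add_length (L : List (Equiv.Perm (Fin n)))
    (hL : ∀ g ∈ L, g ∈ Set.range (bsGen n)) (x : Fin n) :
    x.val ≤ (L.prod x).val + L.length := by
  induction L with
  | nil => simp
  | cons g L ih =>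
    obtain ⟨i, rfl⟩ := hL g List.mem_cons_self
    have := val_le_bsGen_apply_add_one i (L.prod x)
    have := ih fun g hg => hL g (List.mem_cons_of_mem _ hg)
    rw [List.prod_cons, Equiv.Perm.mul_apply, List.length_cons]
    omega

def shiftWord (n j d : ℕ) : List (Equiv.Perm (Fin n)) :=
  List.map (fun t => bsGen n (j + t)) (List.range d)

lemma shiftWord_succ (j d : ℕ) :
    shiftWord n j (d + 1) = bsGen n j :: shiftWord n (j + 1) d := by
  simp only [shiftWord, List.range_succ_eq_map, List.map_cons, List.map_map, add_zero]
  congr 2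
  funext t
  simp only [Function.comp_apply, Nat.succ_eq_add_one]
  ac_rfl

lemma shiftWord_prod_apply {j d : ℕ} (hj : 1 ≤ j) {x : Fin n} (hx : x.val + 1 = j + d) :
    ((shiftWord n j d).prod x).val + 1 = j := by
  induction d generalizing j with
  | zero => simpa [shiftWord] using hx
  | succ d ih =>
    rw [shiftWord_succ, List.prod_cons, Equiv.Perm.mul_apply,
      bsGen_apply_self hj (by have := ih (j := j + 1) (by omega) (by omega); omega)]
    omega

lemma eq_shiftWord_of_prod_apply (L : List (Equiv.Perm (Fin n)))
    (hL : ∀ g ∈ L, g ∈ Set.range (bsGen n)) {j : ℕ} {x : Fin n}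
    (hx : x.val + 1 = j + L.length) (h : (L.prod x).val + 1 = j) :
    L = shiftWord n j L.length := by
  induction L generalizing j with
  | nil => rfl
  | cons g L ih =>
    obtain ⟨i, rfl⟩ := hL g List.mem_cons_self
    have hL' : ∀ g ∈ L, g ∈ Set.range (bsGen n) := fun g hg => hL g (List.mem_cons_of_mem _ hg)
    rw [List.length_cons] at hx ⊢
    rw [List.prod_cons, Equiv.Perm.mul_apply] at h
    have h₁ := val_le_prod_apply_add_length L hL' x
    have h₂ := val_le_bsGen_apply_add_one i (L.prod x)
    have hy : (L.prod x).val = j := by omega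
    have hi : i = j := hy ▸ eq_of_bsGen_apply_add_one (by omega)
    rw [shiftWord_succ, hi, ← ih hL' (by omega) (by omega)]

lemma labelList_cons {u x v : Equiv.Perm (Fin n)} (h : (BS n).Adj u x) (w : (BS n).Walk x v) :
    labelList (Walk.cons h w) = (u⁻¹ * x) :: labelList w := rfl

lemma length_labelList {u v : Equiv.Perm (Fin n)} (w : (BS n).Walk u v) :
    (labelList w).length = w.length := by
  rw [labelList, List.length_map, Walk.length_darts]

lemma labelList_mem_range {u v : Equiv.Perm (Fin n)} (w : (BS n).Walk u v) :
    ∀ g ∈ labelList w, g ∈ Set.range (bsGen n) := by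
  induction w with
  | nil => simp [labelList]
  | cons h w ih =>
    rw [labelList_cons]
    rintro g (_ | ⟨_, hg⟩)
    · obtain ⟨i, -, -, rfl⟩ := h
      exact ⟨i, by group⟩
    · exact ih g hg

lemma mul_prod_labelList {u v : Equiv.Perm (Fin n)} (w : (BS n).Walk u v) :
    u * (labelList w).prod = v := by
  induction w with
  | nil => simp [labelList]
  | cons h w ih => rw [labelList_cons, List.prod_cons, ← mul_assoc, mul_inv_cancel_left, ih]

lemma eq_of_labelList_eq {u v : Equiv.Perm (Fin n)} {w w' : (BS n).Walk u v}
    (h : labelList w = labelList w') : w = w' := by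
  induction w with
  | nil =>
    cases w' with
    | nil => rfl
    | cons => simp [labelList] at h
  | cons a w ih =>
    cases w' with
    | nil => simp [labelList] at h
    | cons a' w' =>
      rw [labelList_cons, labelList_cons, List.cons.injEq] at h
      obtain rfl := mul_left_cancel h.1
      rw [ih h.2]

lemma exists_walk_length_eq_shiftWord (π : Equiv.Perm (Fin n)) {j d : ℕ} (hj : 1 ≤ j)
    (hjd : j + d ≤ n) :
    ∃ w : (BS n).Walk π (π * (shiftWord n j d).prod), w.length = d := by
  induction d generalizing j π with
  | zero => exact ⟨Walk.nil.copy rfl (by simp [shiftWord]), rfl⟩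
  | succ d ih =>
    obtain ⟨w, hw⟩ := ih (π * bsGen n j) (j := j + 1) (by omega) (by omega)
    have hadj : (BS n).Adj π (π * bsGen n j) := ⟨j, by omega, by omega, rfl⟩
    refine ⟨(Walk.cons hadj w).copy rfl (by rw [shiftWord_succ, List.prod_cons, mul_assoc]), ?_⟩
    simp [hw]

lemma val_le_apply_add_length {u v : Equiv.Perm (Fin n)} (w : (BS n).Walk u v) (x : Fin n) :
    x.val ≤ ((u⁻¹ * v) x).val + w.length := by
  have := val_le_prod_apply_add_length _ (labelList_mem_range w) x
  rwa [length_labelList, ← inv_mul_cancel_left u (labelList w).prod, mul_prod_labelList] at this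

lemma labelList_eq_shiftWord {u v : Equiv.Perm (Fin n)} {j d : ℕ} {x : Fin n}
    (w : (BS n).Walk u v) (hw : w.length = d) (hx : x.val + 1 = j + d)
    (h : ((u⁻¹ * v) x).val + 1 = j) : labelList w = shiftWord n j d := by
  rw [← mul_prod_labelList w, inv_mul_cancel_left] at h
  have := eq_shiftWord_of_prod_apply _ (labelList_mem_range w) (by rwa [length_labelList, hw]) h
  rwa [length_labelList, hw] at this

end BubbleSort

open BubbleSort in
theorem bs_dependent_shift_unique_path_general (n : ℕ) (π : Equiv.Perm (Fin n))
    (d j : ℕ) (hj1 : 1 ≤ j) (hj2 : j ≤ n - d) :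
    (∃! w : (BS n).Walk π (π * (List.map (fun t => bsGen n (j + t)) (List.range d)).prod),
        w.IsPath ∧ w.length = d) ∧
      ∀ w : (BS n).Walk π (π * (List.map (fun t => bsGen n (j + t)) (List.range d)).prod),
        w.IsPath → w.length = d →
          labelList w = List.map (fun t => bsGen n (j + t)) (List.range d) := by
  let x : Fin n := ⟨j + d - 1, by omega⟩
  have hx : x.val + 1 = j + d := by simp only [x]; omega
  have hσx : ((π⁻¹ * (π * (shiftWord n j d).prod)) x).val + 1 = j := by
    rw [inv_mul_cancel_left]
    exact shiftWord_prod_apply hj1 hx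
  obtain ⟨w, hw⟩ := exists_walk_length_eq_shiftWord π hj1 (by omega : j + d ≤ n)
  have hbypass : w.bypass.length = d := by
    have := val_le_apply_add_length w.bypass x
    have := w.length_bypass_le_length
    omega
  have hlabels (w' : (BS n).Walk π (π * (shiftWord n j d).prod)) (hw' : w'.length = d) :
      labelList w' = shiftWord n j d :=
    labelList_eq_shiftWord w' hw' hx hσx
  refine ⟨⟨w.bypass, ⟨w.bypass_isPath, hbypass⟩, fun w' hw' => ?_⟩, fun w' _ hw' => hlabels w' hw'⟩
  exact eq_of_labelList_eq <| (hlabels w' hw'.2).trans (hlabels _ hbypass).symm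

/-- in `BS_n`, `n ≥ 3`, for `1 ≤ d ≤ n-2`, `1 ≤ j ≤ n-d` and
`τ = π · b_j · b_{j+1} · ⋯ · b_{j+d-1}`, the walk `π, πb_j, πb_jb_{j+1}, …, τ` is the
unique path of length `d` from `π` to `τ` (so in particular there is no second,
internally disjoint, path of length `d`). -/
theorem bs_dependent_shift_unique_path (n : ℕ) (hn : 3 ≤ n) (π : Equiv.Perm (Fin n))
    (d j : ℕ) (hd1 : 1 ≤ d) (hd2 : d ≤ n - 2) (hj1 : 1 ≤ j) (hj2 : j ≤ n - d) :
    (∃! w : (BS n).Walk π (π * (List.map (fun t => bsGen n (j + t)) (List.range d)).prod),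
        w.IsPath ∧ w.length = d) ∧
      ∀ w : (BS n).Walk π (π * (List.map (fun t => bsGen n (j + t)) (List.range d)).prod),
        w.IsPath → w.length = d →
          labelList w = List.map (fun t => bsGen n (j + t)) (List.range d) :=
  bs_dependent_shift_unique_path_general n π d j hj1 hj2
end
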